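/- For a subcritical Galton–Watson process (Z_n) with offspring mean μ ∈ (0,1) and E[ξ³] < ∞, and for l ≥ m ≥ n, we have E[Z_n Z_m Z_l] ≤ C μ^l for some constant C independent of n, m, l. -/

import Mathlib

/-!
Let `F_L` be the σ-algebra generated by the offspring numbers `ξ (k, j)` with `k < L`. Given
`F_L`, the population `Z (L + 1)` is a sum of `Z L` independent copies of `ξ`, so for every
`F_L`-measurable `h ≥ 0`
* `E[h Z_{L+1}] = μ E[h Z_L]`,
* `E[h Z_{L+1}²] ≤ E[ξ²] E[h Z_L] + μ² E[h Z_L²]`,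
* `E[h Z_{L+1}³] ≤ E[ξ³] E[h Z_L] + 3 E[ξ²] μ E[h Z_L²] + μ³ E[h Z_L³]`.
Since `μ < 1`, a recursion `u_{k+1} ≤ μ² u_k + B μ^k` forces `u_k ≤ C μ^k`. This yields
`E[Z_k³] ≤ C μ^k` and `E[h Z_{n+k}²] ≤ C E[h Z_n²] μ^k`, whence for `n ≤ m ≤ l`
`E[Z_n Z_m Z_l] = μ^(l-m) E[Z_n Z_m²] ≤ C μ^(l-m) μ^(m-n) E[Z_n³] ≤ C' μ^l`.
-/

open MeasureTheory ProbabilityTheory Finset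
open scoped ENNReal

section Freezing

variable {Ω : Type*} {mΩ : MeasurableSpace Ω} {P : Measure Ω}

/-- The integrated form of `E[f_X | F] = (N ↦ E[f_N]) ∘ X` for an `F`-measurable `X` and a family
`f_N` independent of `F`. -/
theorem lintegral_mul_comp_eq_of_indep {F G : MeasurableSpace Ω} (hF : F ≤ mΩ)
    (hG : G ≤ mΩ) (hFG : Indep F G P) {X : Ω → ℕ} (hX : Measurable[F] X) {h : Ω → ℝ≥0∞}
    (hh : Measurable[F] h) {f : ℕ → Ω → ℝ≥0∞} (hf : ∀ N, Measurable[G] (f N)) :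
    ∫⁻ ω, h ω * f (X ω) ω ∂P = ∫⁻ ω, h ω * ∫⁻ ω', f (X ω) ω' ∂P ∂P := by
  have hslice : ∀ N, Measurable[F] ((X ⁻¹' {N}).indicator h) :=
    fun N => hh.indicator (hX (measurableSet_singleton N))
  have hsplit : ∀ g : ℕ → Ω → ℝ≥0∞, (∀ N, Measurable[mΩ] (g N)) →
      ∫⁻ ω, h ω * g (X ω) ω ∂P
        = ∑' N, ∫⁻ ω, (X ⁻¹' {N}).indicator h ω * g N ω ∂P := by
    intro g hg
    rw [← lintegral_tsum (f := fun N ω => (X ⁻¹' {N}).indicator h ω * g N ω)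
      fun N => (((hslice N).mono hF le_rfl).mul (hg N)).aemeasurable]
    refine lintegral_congr fun ω => ?_
    rw [tsum_eq_single (X ω) fun N hN => by simp [Ne.symm hN]]
    simp
  rw [hsplit f fun N => (hf N).mono hG le_rfl, hsplit (fun N _ => ∫⁻ ω', f N ω' ∂P)
    fun N => measurable_const]
  refine tsum_congr fun N => ?_
  rw [lintegral_mul_eq_lintegral_mul_lintegral_of_independent_measurableSpace hF hG hFG
    (hslice N) (hf N), lintegral_mul_const _ ((hslice N).mono hF le_rfl)]

end Freezing

section SigmaOf

variable {Ω ι β : Type*} {mΩ : MeasurableSpace Ω} [mβ : MeasurableSpace β]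

abbrev sigmaOf (ξ : ι → Ω → β) (S : Set ι) : MeasurableSpace Ω :=
  ⨆ q ∈ S, MeasurableSpace.comap (ξ q) mβ

variable {ξ : ι → Ω → β}

theorem sigmaOf_le (hξ : ∀ q, Measurable (ξ q)) (S : Set ι) : sigmaOf ξ S ≤ mΩ :=
  iSup₂_le fun q _ => (hξ q).comap_le

theorem sigmaOf_mono {S T : Set ι} (hST : S ⊆ T) : sigmaOf ξ S ≤ sigmaOf ξ T :=
  biSup_mono hST

theorem measurable_sigmaOf {S : Set ι} {q : ι} (hq : q ∈ S) : Measurable[sigmaOf ξ S] (ξ q) :=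
  Measurable.of_comap_le
    (le_iSup₂ (f := fun q (_ : q ∈ S) => MeasurableSpace.comap (ξ q) mβ) q hq)

theorem indep_sigmaOf_of_disjoint {P : Measure Ω} (hξ : ∀ q, Measurable (ξ q))
    (hind : iIndepFun ξ P) {S T : Set ι} (hST : Disjoint S T) :
    Indep (sigmaOf ξ S) (sigmaOf ξ T) P :=
  indep_iSup_of_disjoint (fun q => (hξ q).comap_le) hind hST

end SigmaOf

theorem natCast_pow_le_pow (x : ℕ) {a b : ℕ} (ha : a ≠ 0) (hab : a ≤ b) :
    (x : ℝ≥0∞) ^ a ≤ (x : ℝ≥0∞) ^ b := by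
  rcases Nat.eq_zero_or_pos x with rfl | hx
  · simp [ha]
  · exact pow_le_pow_right₀ (by exact_mod_cast hx) hab

noncomputable def ennMoment (ν : Measure ℕ) (r : ℕ) : ℝ≥0∞ := ∫⁻ x, (x : ℝ≥0∞) ^ r ∂ν

theorem ennMoment_mono {ν : Measure ℕ} {a b : ℕ} (ha : a ≠ 0) (hab : a ≤ b) :
    ennMoment ν a ≤ ennMoment ν b :=
  lintegral_mono fun x => natCast_pow_le_pow x ha hab

theorem ennMoment_zero (ν : Measure ℕ) [IsProbabilityMeasure ν] : ennMoment ν 0 = 1 := by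
  simp [ennMoment]

section PartialSums

variable {Ω : Type*} {mΩ : MeasurableSpace Ω} {P : Measure Ω} {Y : ℕ → Ω → ℕ} {ν : Measure ℕ}

theorem integral_natCast_eq_toReal_lintegral {X : Ω → ℕ} (hX : Measurable X) :
    ∫ ω, (X ω : ℝ) ∂P = (∫⁻ ω, (X ω : ℝ≥0∞) ∂P).toReal := by
  simp_rw [integral_eq_lintegral_of_nonneg_ae (ae_of_all _ fun ω => Nat.cast_nonneg (X ω))
    (measurable_from_top.comp hX).aestronglyMeasurable, ENNReal.ofReal_natCast]

theorem lintegral_comp_eq_of_map_eq {X : Ω → ℕ} (hX : Measurable X) (hlaw : P.map X = ν)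
    (f : ℕ → ℝ≥0∞) : ∫⁻ ω, f (X ω) ∂P = ∫⁻ x, f x ∂ν := by
  rw [← hlaw, lintegral_map measurable_from_top hX]

theorem lintegral_sum_range (hY : ∀ j, Measurable (Y j)) (hlaw : ∀ j, P.map (Y j) = ν)
    (N : ℕ) : ∫⁻ ω, ∑ j ∈ range N, (Y j ω : ℝ≥0∞) ∂P = N * ennMoment ν 1 := by
  rw [lintegral_finsetSum (f := fun j ω => (Y j ω : ℝ≥0∞)) _
    fun j _ => measurable_from_top.comp (hY j)]
  simp [lintegral_comp_eq_of_map_eq (hY _) (hlaw _) (fun x => (x : ℝ≥0∞)), ennMoment]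

theorem lintegral_sum_range_succ_pow (hY : ∀ j, Measurable (Y j)) (hind : iIndepFun Y P)
    (hlaw : ∀ j, P.map (Y j) = ν) (N r : ℕ) :
    ∫⁻ ω, (∑ j ∈ range (N + 1), (Y j ω : ℝ≥0∞)) ^ r ∂P
      = ∑ k ∈ range (r + 1), (∫⁻ ω, (∑ j ∈ range N, (Y j ω : ℝ≥0∞)) ^ k ∂P)
          * ennMoment ν (r - k) * r.choose k := by
  set S : Ω → ℝ≥0∞ := fun ω => ∑ j ∈ range N, (Y j ω : ℝ≥0∞)
  have hYc : ∀ j, Measurable fun ω => (Y j ω : ℝ≥0∞) := fun j => measurable_from_top.comp (hY j)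
  have hS : Measurable S := Finset.measurable_sum _ fun j _ => hYc j
  have hindS : IndepFun S (fun ω => (Y N ω : ℝ≥0∞)) P := by
    convert (hind.comp (fun _ (x : ℕ) => (x : ℝ≥0∞)) fun _ => measurable_from_top)
      |>.indepFun_finsetSum_of_notMem hYc (s := range N) (i := N) (by simp) using 1
    · ext ω
      simp [S]
    · rfl
  have hterm : ∀ k, ∫⁻ ω, S ω ^ k * (Y N ω : ℝ≥0∞) ^ (r - k) ∂P
      = (∫⁻ ω, S ω ^ k ∂P) * ennMoment ν (r - k) := fun k => by
    rw [lintegral_mul_eq_lintegral_mul_lintegral_of_indepFun'' (hS.pow_const k).aemeasurable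
      ((hYc N).pow_const _).aemeasurable
      (hindS.comp (measurable_id.pow_const k) (measurable_id.pow_const (r - k))),
      lintegral_comp_eq_of_map_eq (hY N) (hlaw N) (fun x => (x : ℝ≥0∞) ^ (r - k)), ennMoment]
  have hexpand : ∀ ω, (∑ j ∈ range (N + 1), (Y j ω : ℝ≥0∞)) ^ r
      = ∑ k ∈ range (r + 1), S ω ^ k * (Y N ω : ℝ≥0∞) ^ (r - k) * r.choose k := fun ω => by
    rw [sum_range_succ, add_pow]
  simp_rw [hexpand]
  rw [lintegral_finsetSum (f := fun k ω => S ω ^ k * (Y N ω : ℝ≥0∞) ^ (r - k) * r.choose k) _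
    fun k _ => ((hS.pow_const k).mul ((hYc N).pow_const _)).mul_const _]
  refine sum_congr rfl fun k _ => ?_
  rw [lintegral_mul_const' _ _ (ENNReal.natCast_ne_top _), hterm]

variable [IsProbabilityMeasure P]

theorem lintegral_sum_range_sq_le (hY : ∀ j, Measurable (Y j)) (hind : iIndepFun Y P)
    (hlaw : ∀ j, P.map (Y j) = ν) (N : ℕ) :
    ∫⁻ ω, (∑ j ∈ range N, (Y j ω : ℝ≥0∞)) ^ 2 ∂P
      ≤ N * ennMoment ν 2 + N ^ 2 * ennMoment ν 1 ^ 2 := by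
  have : IsProbabilityMeasure ν := hlaw 0 ▸ Measure.isProbabilityMeasure_map (hY 0).aemeasurable
  induction N with
  | zero => simp
  | succ N ih =>
    calc _ = ennMoment ν 2 + 2 * (N * ennMoment ν 1) * ennMoment ν 1
          + ∫⁻ ω, (∑ j ∈ range N, (Y j ω : ℝ≥0∞)) ^ 2 ∂P := by
          rw [lintegral_sum_range_succ_pow hY hind hlaw]
          simp only [Nat.reduceAdd, sum_range_succ, range_one, sum_singleton, pow_zero,
            lintegral_const, measure_univ, mul_one, tsub_zero, one_mul, Nat.choose_zero_right,
            Nat.cast_one, pow_one, lintegral_sum_range hY hlaw, Nat.add_one_sub_one,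
            Nat.choose_succ_self_right, Nat.cast_ofNat, tsub_self, ennMoment_zero, Nat.choose_self]
          ring
      _ ≤ ennMoment ν 2 + 2 * (N * ennMoment ν 1) * ennMoment ν 1
          + (N * ennMoment ν 2 + N ^ 2 * ennMoment ν 1 ^ 2) := by gcongr
      _ ≤ _ + ennMoment ν 1 ^ 2 := le_self_add
      _ = _ := by push_cast; ring

theorem lintegral_sum_range_cube_le (hY : ∀ j, Measurable (Y j)) (hind : iIndepFun Y P)
    (hlaw : ∀ j, P.map (Y j) = ν) (N : ℕ) :
    ∫⁻ ω, (∑ j ∈ range N, (Y j ω : ℝ≥0∞)) ^ 3 ∂P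
      ≤ N * ennMoment ν 3 + 3 * N ^ 2 * (ennMoment ν 2 * ennMoment ν 1)
        + N ^ 3 * ennMoment ν 1 ^ 3 := by
  have : IsProbabilityMeasure ν := hlaw 0 ▸ Measure.isProbabilityMeasure_map (hY 0).aemeasurable
  induction N with
  | zero => simp
  | succ N ih =>
    calc _ = ennMoment ν 3 + 3 * (N * ennMoment ν 1) * ennMoment ν 2
          + 3 * (∫⁻ ω, (∑ j ∈ range N, (Y j ω : ℝ≥0∞)) ^ 2 ∂P) * ennMoment ν 1
          + ∫⁻ ω, (∑ j ∈ range N, (Y j ω : ℝ≥0∞)) ^ 3 ∂P := by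
          rw [lintegral_sum_range_succ_pow hY hind hlaw]
          simp only [Nat.reduceAdd, sum_range_succ, range_one, sum_singleton, pow_zero,
            lintegral_const, measure_univ, mul_one, tsub_zero, one_mul, Nat.choose_zero_right,
            Nat.cast_one, pow_one, lintegral_sum_range hY hlaw, Nat.add_one_sub_one,
            Nat.choose_one_right, Nat.cast_ofNat, Nat.reduceSub, Nat.choose_succ_self_right,
            tsub_self, ennMoment_zero, Nat.choose_self]
          ring
      _ ≤ ennMoment ν 3 + 3 * (N * ennMoment ν 1) * ennMoment ν 2
          + 3 * (N * ennMoment ν 2 + N ^ 2 * ennMoment ν 1 ^ 2) * ennMoment ν 1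
          + (N * ennMoment ν 3 + 3 * N ^ 2 * (ennMoment ν 2 * ennMoment ν 1)
            + N ^ 3 * ennMoment ν 1 ^ 3) := by
          gcongr
          exact lintegral_sum_range_sq_le hY hind hlaw N
      _ ≤ _ + (3 * (ennMoment ν 2 * ennMoment ν 1) + (3 * N + 1) * ennMoment ν 1 ^ 3) :=
          le_self_add
      _ = _ := by push_cast; ring

end PartialSums

theorem le_mul_pow_of_le_sq_mul_add {r A B : ℝ≥0∞} (hr0 : r ≠ 0) (hr1 : r < 1) {u : ℕ → ℝ≥0∞}
    (h0 : u 0 ≤ A) (hstep : ∀ k, u (k + 1) ≤ r ^ 2 * u k + B * r ^ k) (k : ℕ) :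
    u k ≤ (A + (r * (1 - r))⁻¹ * B) * r ^ k := by
  set D := (r * (1 - r))⁻¹ * B with hD_def
  have hD : r ^ 2 * D + B = r * D := by
    have hne0 : r * (1 - r) ≠ 0 := mul_ne_zero hr0 (tsub_pos_of_lt hr1).ne'
    have hnetop : r * (1 - r) ≠ ∞ := ENNReal.mul_ne_top (hr1.trans ENNReal.one_lt_top).ne
      (ENNReal.sub_ne_top ENNReal.one_ne_top)
    calc r ^ 2 * D + B = r ^ 2 * D + r * (1 - r) * D := by
          rw [hD_def, ← mul_assoc (r * (1 - r)), ENNReal.mul_inv_cancel hne0 hnetop, one_mul]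
      _ = r * (r + (1 - r)) * D := by ring
      _ = r * D := by rw [add_tsub_cancel_of_le hr1.le, mul_one]
  induction k with
  | zero => simpa using h0.trans le_self_add
  | succ k ih =>
    calc u (k + 1) ≤ r ^ 2 * ((A + D) * r ^ k) + B * r ^ k := (hstep k).trans (by gcongr)
      _ = (r ^ 2 * A + (r ^ 2 * D + B)) * r ^ k := by ring
      _ ≤ (r * A + r * D) * r ^ k := by
          rw [hD]; gcongr; exact pow_le_of_le_one (zero_le) hr1.le two_ne_zero
      _ = (A + D) * r ^ (k + 1) := by ring

abbrev pastSigma {Ω : Type*} (ξ : ℕ × ℕ → Ω → ℕ) (n : ℕ) : MeasurableSpace Ω :=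
  sigmaOf ξ {q | q.1 < n}

theorem pastSigma_mono {Ω : Type*} (ξ : ℕ × ℕ → Ω → ℕ) : Monotone (pastSigma ξ) :=
  fun _ _ hnm => sigmaOf_mono fun _ hq => lt_of_lt_of_le hq hnm

structure IsGaltonWatson {Ω : Type*} {mΩ : MeasurableSpace Ω} (P : Measure Ω)
    (ξ : ℕ × ℕ → Ω → ℕ) (ν : Measure ℕ) (Z : ℕ → Ω → ℕ) : Prop where
  measurable : ∀ q, Measurable (ξ q)
  indep : iIndepFun ξ P
  map_eq : ∀ q, P.map (ξ q) = ν
  zero : ∀ ω, Z 0 ω = 1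
  succ : ∀ n ω, Z (n + 1) ω = ∑ j ∈ range (Z n ω), ξ (n, j) ω

namespace IsGaltonWatson

variable {Ω : Type*} {mΩ : MeasurableSpace Ω} {P : Measure Ω} {ξ : ℕ × ℕ → Ω → ℕ}
  {ν : Measure ℕ} {Z : ℕ → Ω → ℕ} (hGW : IsGaltonWatson P ξ ν Z)

include hGW

theorem measurable_Z_past {k L : ℕ} (hk : k ≤ L) : Measurable[pastSigma ξ L] (Z k) := by
  induction k with
  | zero => simp only [funext hGW.zero, measurable_const]
  | succ k ih =>
    have hsum : Measurable[(pastSigma ξ L).prod ⊤]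
        fun p : Ω × ℕ => ∑ j ∈ range p.2, ξ (k, j) p.1 :=
      measurable_from_prod_countable_left fun N => Finset.measurable_fun_sum (range N)
        fun j _ => measurable_sigmaOf (show (k, j).1 < L from hk)
    rw [funext (hGW.succ k)]
    exact hsum.comp (measurable_id.prodMk (ih (by omega)))

theorem measurable_Z (k : ℕ) : Measurable (Z k) :=
  (hGW.measurable_Z_past le_rfl).mono (sigmaOf_le hGW.measurable _) le_rfl

theorem lintegral_mul_Z_succ_pow {L : ℕ} {h : Ω → ℝ≥0∞}
    (hh : Measurable[pastSigma ξ L] h) (r : ℕ) :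
    ∫⁻ ω, h ω * (Z (L + 1) ω : ℝ≥0∞) ^ r ∂P
      = ∫⁻ ω, h ω * ∫⁻ ω', (∑ j ∈ range (Z L ω), (ξ (L, j) ω' : ℝ≥0∞)) ^ r ∂P ∂P := by
  have hdisj : Disjoint {q : ℕ × ℕ | q.1 < L} {q | q.1 = L} :=
    Set.disjoint_left.2 fun q hq hq' => (ne_of_lt hq) hq'
  simp_rw [hGW.succ, Nat.cast_sum]
  refine lintegral_mul_comp_eq_of_indep (sigmaOf_le hGW.measurable _)
    (sigmaOf_le hGW.measurable _) (indep_sigmaOf_of_disjoint hGW.measurable hGW.indep hdisj)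
    (hGW.measurable_Z_past le_rfl) hh (f := fun N ω => (∑ j ∈ range N, (ξ (L, j) ω : ℝ≥0∞)) ^ r)
    fun N => (Finset.measurable_sum _ fun j _ =>
      measurable_from_top.comp (measurable_sigmaOf (show (L, j).1 = L from rfl))).pow_const r

theorem iIndepFun_row (L : ℕ) : iIndepFun (fun j => ξ (L, j)) P :=
  hGW.indep.precomp (Prod.mk_right_injective L)

variable {L : ℕ} {h : Ω → ℝ≥0∞}

theorem lintegral_mul_Z_succ (hh : Measurable[pastSigma ξ L] h) :
    ∫⁻ ω, h ω * Z (L + 1) ω ∂P = (∫⁻ ω, h ω * Z L ω ∂P) * ennMoment ν 1 := by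
  have hhZ : Measurable fun ω => h ω * Z L ω :=
    (hh.mono (sigmaOf_le hGW.measurable _) le_rfl).mul
      (measurable_from_top.comp (hGW.measurable_Z L))
  simpa only [pow_one, lintegral_sum_range (fun j => hGW.measurable _) (fun j => hGW.map_eq _),
    ← mul_assoc, lintegral_mul_const _ hhZ] using hGW.lintegral_mul_Z_succ_pow hh 1

theorem lintegral_mul_Z_add {n : ℕ} (hh : Measurable[pastSigma ξ n] h) (k : ℕ) :
    ∫⁻ ω, h ω * Z (n + k) ω ∂P = (∫⁻ ω, h ω * Z n ω ∂P) * ennMoment ν 1 ^ k := by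
  induction k with
  | zero => simp
  | succ k ih =>
    rw [← add_assoc, hGW.lintegral_mul_Z_succ (hh.mono (pastSigma_mono ξ (by omega)) le_rfl), ih,
      pow_succ, mul_assoc]

variable [IsProbabilityMeasure P]

theorem lintegral_mul_Z_succ_sq_le (hh : Measurable[pastSigma ξ L] h) :
    ∫⁻ ω, h ω * (Z (L + 1) ω : ℝ≥0∞) ^ 2 ∂P
      ≤ (∫⁻ ω, h ω * Z L ω ∂P) * ennMoment ν 2
        + (∫⁻ ω, h ω * (Z L ω : ℝ≥0∞) ^ 2 ∂P) * ennMoment ν 1 ^ 2 := by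
  have hhm : Measurable h := hh.mono (sigmaOf_le hGW.measurable _) le_rfl
  have hZm : Measurable fun ω => (Z L ω : ℝ≥0∞) := measurable_from_top.comp (hGW.measurable_Z L)
  rw [hGW.lintegral_mul_Z_succ_pow hh 2]
  calc _ ≤ ∫⁻ ω, h ω * Z L ω * ennMoment ν 2
          + h ω * (Z L ω : ℝ≥0∞) ^ 2 * ennMoment ν 1 ^ 2 ∂P := lintegral_mono fun ω => by
        grw [lintegral_sum_range_sq_le (fun j => hGW.measurable _) (hGW.iIndepFun_row L)
          (fun j => hGW.map_eq _)]
        exact le_of_eq (by ring)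
    _ = _ := by
        rw [lintegral_add_left (by fun_prop), lintegral_mul_const _ (by fun_prop),
          lintegral_mul_const _ (by fun_prop)]

theorem lintegral_mul_Z_succ_cube_le (hh : Measurable[pastSigma ξ L] h) :
    ∫⁻ ω, h ω * (Z (L + 1) ω : ℝ≥0∞) ^ 3 ∂P
      ≤ (∫⁻ ω, h ω * Z L ω ∂P) * ennMoment ν 3
        + (∫⁻ ω, h ω * (Z L ω : ℝ≥0∞) ^ 2 ∂P) * (3 * (ennMoment ν 2 * ennMoment ν 1))
        + (∫⁻ ω, h ω * (Z L ω : ℝ≥0∞) ^ 3 ∂P) * ennMoment ν 1 ^ 3 := by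
  have hhm : Measurable h := hh.mono (sigmaOf_le hGW.measurable _) le_rfl
  have hZm : Measurable fun ω => (Z L ω : ℝ≥0∞) := measurable_from_top.comp (hGW.measurable_Z L)
  rw [hGW.lintegral_mul_Z_succ_pow hh 3]
  calc _ ≤ ∫⁻ ω, h ω * Z L ω * ennMoment ν 3
          + h ω * (Z L ω : ℝ≥0∞) ^ 2 * (3 * (ennMoment ν 2 * ennMoment ν 1))
          + h ω * (Z L ω : ℝ≥0∞) ^ 3 * ennMoment ν 1 ^ 3 ∂P := lintegral_mono fun ω => by
        grw [lintegral_sum_range_cube_le (fun j => hGW.measurable _) (hGW.iIndepFun_row L)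
          (fun j => hGW.map_eq _)]
        exact le_of_eq (by ring)
    _ = _ := by
        rw [lintegral_add_left (by fun_prop), lintegral_add_left (by fun_prop),
          lintegral_mul_const _ (by fun_prop), lintegral_mul_const _ (by fun_prop),
          lintegral_mul_const _ (by fun_prop)]

theorem exists_lintegral_mul_Z_add_sq_le (hm0 : ennMoment ν 1 ≠ 0) (hm1 : ennMoment ν 1 < 1)
    (h2 : ennMoment ν 2 ≠ ∞) :
    ∃ C ≠ ∞, ∀ n k (h : Ω → ℝ≥0∞), Measurable[pastSigma ξ n] h →
      ∫⁻ ω, h ω * (Z (n + k) ω : ℝ≥0∞) ^ 2 ∂P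
        ≤ (∫⁻ ω, h ω * (Z n ω : ℝ≥0∞) ^ 2 ∂P) * C * ennMoment ν 1 ^ k := by
  set m := ennMoment ν 1
  refine ⟨1 + (m * (1 - m))⁻¹ * ennMoment ν 2, ?_, fun n k h hh => ?_⟩
  · exact ENNReal.add_ne_top.2 ⟨ENNReal.one_ne_top, ENNReal.mul_ne_top
      (ENNReal.inv_ne_top.2 (mul_ne_zero hm0 (tsub_pos_of_lt hm1).ne')) h2⟩
  set a := ∫⁻ ω, h ω * (Z n ω : ℝ≥0∞) ^ 2 ∂P
  have hstep : ∀ k, ∫⁻ ω, h ω * (Z (n + (k + 1)) ω : ℝ≥0∞) ^ 2 ∂P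
      ≤ m ^ 2 * ∫⁻ ω, h ω * (Z (n + k) ω : ℝ≥0∞) ^ 2 ∂P + a * ennMoment ν 2 * m ^ k := by
    intro k
    have hZ : ∫⁻ ω, h ω * Z n ω ∂P ≤ a :=
      lintegral_mono fun ω => by grw [← natCast_pow_le_pow (Z n ω) one_ne_zero one_le_two, pow_one]
    calc _ ≤ (∫⁻ ω, h ω * Z (n + k) ω ∂P) * ennMoment ν 2
          + (∫⁻ ω, h ω * (Z (n + k) ω : ℝ≥0∞) ^ 2 ∂P) * m ^ 2 :=
          hGW.lintegral_mul_Z_succ_sq_le (hh.mono (pastSigma_mono ξ (by omega)) le_rfl)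
      _ = (∫⁻ ω, h ω * Z n ω ∂P) * m ^ k * ennMoment ν 2
          + (∫⁻ ω, h ω * (Z (n + k) ω : ℝ≥0∞) ^ 2 ∂P) * m ^ 2 := by
          rw [hGW.lintegral_mul_Z_add hh]
      _ ≤ _ := by grw [hZ]; exact le_of_eq (by ring)
  calc _ ≤ (a + (m * (1 - m))⁻¹ * (a * ennMoment ν 2)) * m ^ k :=
        le_mul_pow_of_le_sq_mul_add (u := fun k => ∫⁻ ω, h ω * (Z (n + k) ω : ℝ≥0∞) ^ 2 ∂P)
          hm0 hm1 le_rfl hstep k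
    _ = _ := by ring

theorem exists_lintegral_Z_cube_le (hm0 : ennMoment ν 1 ≠ 0) (hm1 : ennMoment ν 1 < 1)
    (h2 : ennMoment ν 2 ≠ ∞) (h3 : ennMoment ν 3 ≠ ∞) :
    ∃ C ≠ ∞, ∀ k, ∫⁻ ω, (Z k ω : ℝ≥0∞) ^ 3 ∂P ≤ C * ennMoment ν 1 ^ k := by
  set m := ennMoment ν 1
  obtain ⟨C₂, hC₂, hsq⟩ := hGW.exists_lintegral_mul_Z_add_sq_le hm0 hm1 h2
  have hmean : ∀ k, ∫⁻ ω, (Z k ω : ℝ≥0∞) ∂P = m ^ k := fun k => by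
    simpa [hGW.zero] using hGW.lintegral_mul_Z_add (n := 0) (h := 1) measurable_const k
  have hsq' : ∀ k, ∫⁻ ω, (Z k ω : ℝ≥0∞) ^ 2 ∂P ≤ C₂ * m ^ k := fun k => by
    simpa [hGW.zero] using hsq 0 k 1 measurable_const
  refine ⟨1 + (m * (1 - m))⁻¹ * (ennMoment ν 3 + 3 * (C₂ * ennMoment ν 2)), ?_,
    le_mul_pow_of_le_sq_mul_add hm0 hm1 (by simp [hGW.zero]) fun k => ?_⟩
  · exact ENNReal.add_ne_top.2 ⟨ENNReal.one_ne_top, ENNReal.mul_ne_top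
      (ENNReal.inv_ne_top.2 (mul_ne_zero hm0 (tsub_pos_of_lt hm1).ne'))
      (ENNReal.add_ne_top.2 ⟨h3, ENNReal.mul_ne_top (by norm_num) (ENNReal.mul_ne_top hC₂ h2)⟩)⟩
  calc _ ≤ (∫⁻ ω, (Z k ω : ℝ≥0∞) ∂P) * ennMoment ν 3
        + (∫⁻ ω, (Z k ω : ℝ≥0∞) ^ 2 ∂P) * (3 * (ennMoment ν 2 * m))
        + (∫⁻ ω, (Z k ω : ℝ≥0∞) ^ 3 ∂P) * m ^ 3 := by
        simpa using hGW.lintegral_mul_Z_succ_cube_le (h := 1) (L := k) measurable_const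
    _ ≤ m ^ k * ennMoment ν 3 + C₂ * m ^ k * (3 * (ennMoment ν 2 * 1))
        + (∫⁻ ω, (Z k ω : ℝ≥0∞) ^ 3 ∂P) * m ^ 2 := by
        rw [hmean]
        gcongr _ + ?_ * (3 * (_ * ?_)) + _ * ?_
        exacts [hsq' k, pow_le_pow_of_le_one zero_le hm1.le (by norm_num)]
    _ = _ := by ring

theorem exists_lintegral_Z_mul_Z_mul_Z_le (hm0 : ennMoment ν 1 ≠ 0) (hm1 : ennMoment ν 1 < 1)
    (h2 : ennMoment ν 2 ≠ ∞) (h3 : ennMoment ν 3 ≠ ∞) :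
    ∃ C ≠ ∞, ∀ n m l, n ≤ m → m ≤ l →
      ∫⁻ ω, (Z n ω : ℝ≥0∞) * Z m ω * Z l ω ∂P ≤ C * ennMoment ν 1 ^ l := by
  obtain ⟨C₂, hC₂, hsq⟩ := hGW.exists_lintegral_mul_Z_add_sq_le hm0 hm1 h2
  obtain ⟨C₃, hC₃, hcube⟩ := hGW.exists_lintegral_Z_cube_le hm0 hm1 h2 h3
  refine ⟨C₃ * C₂, ENNReal.mul_ne_top hC₃ hC₂, fun n m l hnm hml => ?_⟩
  obtain ⟨k, rfl⟩ := Nat.exists_eq_add_of_le hnm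
  obtain ⟨j, rfl⟩ := Nat.exists_eq_add_of_le hml
  have hZ : ∀ {i L}, i ≤ L → Measurable[pastSigma ξ L] fun ω => (Z i ω : ℝ≥0∞) :=
    fun hiL => measurable_from_top.comp (hGW.measurable_Z_past hiL)
  calc ∫⁻ ω, (Z n ω : ℝ≥0∞) * Z (n + k) ω * Z (n + k + j) ω ∂P
      = (∫⁻ ω, (Z n ω : ℝ≥0∞) * (Z (n + k) ω : ℝ≥0∞) ^ 2 ∂P) * ennMoment ν 1 ^ j := by
        rw [hGW.lintegral_mul_Z_add (h := fun ω => (Z n ω : ℝ≥0∞) * Z (n + k) ω)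
          ((hZ (by omega)).mul (hZ le_rfl))]
        simp only [sq, mul_assoc]
    _ ≤ (∫⁻ ω, (Z n ω : ℝ≥0∞) ^ 3 ∂P) * C₂ * ennMoment ν 1 ^ k * ennMoment ν 1 ^ j := by
        grw [hsq n k _ (hZ le_rfl)]
        simp only [← pow_succ', le_refl]
    _ ≤ C₃ * ennMoment ν 1 ^ n * C₂ * ennMoment ν 1 ^ k * ennMoment ν 1 ^ j := by
        grw [hcube n]
    _ = C₃ * C₂ * ennMoment ν 1 ^ (n + k + j) := by ring

end IsGaltonWatson

/-- For a subcritical Galton–Watson process with offspring mean μ ∈ (0,1) and E[ξ³] < ∞,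
for l ≥ m ≥ n one has E[Zₙ Zₘ Z_l] ≤ C μ^l with C independent of n, m, l. -/
theorem stmt6
    {Ω : Type} [MeasureSpace Ω] [IsProbabilityMeasure (ℙ : Measure Ω)]
    (ξ : ℕ × ℕ → Ω → ℕ)
    (hmeas : ∀ q, Measurable (ξ q))
    (hindep : iIndepFun ξ ℙ)
    (hident : ∀ q, Measure.map (ξ q) ℙ = Measure.map (ξ (0, 0)) ℙ)
    (μ : ℝ) (hμ0 : 0 < μ) (hμ1 : μ < 1)
    (hcube : Integrable (fun ω => (ξ (0, 0) ω : ℝ) ^ 3) ℙ)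
    (hmean : ∫ ω, (ξ (0, 0) ω : ℝ) ∂ℙ = μ)
    (Z : ℕ → Ω → ℕ)
    (hZ0 : ∀ ω, Z 0 ω = 1)
    (hZrec : ∀ n ω, Z (n + 1) ω = ∑ j ∈ Finset.range (Z n ω), ξ (n, j) ω) :
    ∃ C : ℝ, ∀ n m l : ℕ, n ≤ m → m ≤ l →
        ∫ ω, (Z n ω : ℝ) * (Z m ω : ℝ) * (Z l ω : ℝ) ∂ℙ ≤ C * μ ^ l := by
  set ν := (ℙ : Measure Ω).map (ξ (0, 0))
  have hGW : IsGaltonWatson ℙ ξ ν Z := ⟨hmeas, hindep, hident, hZ0, hZrec⟩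
  have hmoment : ∀ r, ennMoment ν r = ∫⁻ ω, (ξ (0, 0) ω : ℝ≥0∞) ^ r ∂ℙ := fun r =>
    (lintegral_comp_eq_of_map_eq (hmeas _) rfl fun x => (x : ℝ≥0∞) ^ r).symm
  have h3 : ennMoment ν 3 ≠ ∞ := by
    simpa [hmoment, ENNReal.ofReal_pow] using hcube.lintegral_lt_top.ne
  have h2 : ennMoment ν 2 ≠ ∞ := ne_top_of_le_ne_top h3 (ennMoment_mono two_ne_zero (by norm_num))
  have h1 : ennMoment ν 1 ≠ ∞ := ne_top_of_le_ne_top h3 (ennMoment_mono one_ne_zero (by norm_num))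
  have hm : ennMoment ν 1 = ENNReal.ofReal μ := by
    rw [← ENNReal.ofReal_toReal h1, ← hmean, integral_natCast_eq_toReal_lintegral (hmeas _),
      hmoment]
    simp only [pow_one]
  obtain ⟨C, hC, hbound⟩ := hGW.exists_lintegral_Z_mul_Z_mul_Z_le (by simpa [hm] using hμ0)
    (by simpa [hm] using hμ1) h2 h3
  refine ⟨C.toReal, fun n m l hnm hml => ?_⟩
  calc ∫ ω, (Z n ω : ℝ) * (Z m ω : ℝ) * (Z l ω : ℝ) ∂ℙ
      = (∫⁻ ω, (Z n ω : ℝ≥0∞) * Z m ω * Z l ω ∂ℙ).toReal := by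
        simpa using integral_natCast_eq_toReal_lintegral
          (((hGW.measurable_Z n).mul (hGW.measurable_Z m)).mul (hGW.measurable_Z l))
    _ ≤ (C * ennMoment ν 1 ^ l).toReal :=
        ENNReal.toReal_mono (ENNReal.mul_ne_top hC (ENNReal.pow_ne_top h1)) (hbound n m l hnm hml)
    _ = C.toReal * μ ^ l := by simp [hm, hμ0.le]
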